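/- arXiv:0805.3087 — 2 statements merged into one kernel-verified Lean document; each statement's English description precedes it below -/
import Mathlib

section
/- (Proposition 3, zone I, moderate price gap) Assume p₁ > 0, p₂ > 0, |p₁ − p₂| ≤ ρ (i.e. Δp ∈ [−ρ, ρ]), 0 < Y₁ < p₁·q₁ and 0 < Y₂ < p₂·q₂. Then the quadruple (Y₁/p₁, 0, 0, Y₂/p₂) is a Nash equilibrium, in which each consumer spends the entire income on the local market. -/
/-! Since `|p₁ - p₂| ≤ ρ`, importing is never cheaper than buying locally, so every feasible plan
`(a, b)` of a consumer with local price `p` and income `Y` satisfies `(a + b) p ≤ Y`: its payoff is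
at most `Y / p`. Spending all income locally attains `Y / p`, because `Y < p q` keeps the purchase
within the local supply. Exchanging the two consumers and the two markets reduces consumer II to
consumer I. -/

open Filter

noncomputable section

/-- Consumer I's strategy set. -/
def S1 (Y1 p1 p2 ρ a b : ℝ) : Prop :=
  0 ≤ a ∧ 0 ≤ b ∧ a * p1 + b * (p2 + ρ) ≤ Y1

/-- Consumer II's strategy set. -/
def S2 (Y2 p1 p2 ρ c d : ℝ) : Prop :=
  0 ≤ c ∧ 0 ≤ d ∧ c * (p1 + ρ) + d * p2 ≤ Y2

/-- Consumer I's payoff. -/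
def P1 (q1 q2 a b c d : ℝ) : ℝ := min a q1 + min b (max 0 (q2 - d))

/-- Consumer II's payoff. -/
def P2 (q1 q2 a b c d : ℝ) : ℝ := min d q2 + min c (max 0 (q1 - a))

/-- Nash equilibrium of the one-period game. -/
def NashEq (Y1 Y2 q1 q2 p1 p2 ρ a0 b0 c0 d0 : ℝ) : Prop :=
  S1 Y1 p1 p2 ρ a0 b0 ∧ S2 Y2 p1 p2 ρ c0 d0 ∧
  (∀ a b, S1 Y1 p1 p2 ρ a b → P1 q1 q2 a b c0 d0 ≤ P1 q1 q2 a0 b0 c0 d0) ∧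
  (∀ c d, S2 Y2 p1 p2 ρ c d → P2 q1 q2 a0 b0 c d ≤ P2 q1 q2 a0 b0 c0 d0)

/-- Expenditure-minimal Nash equilibrium (selection rule SR1). -/
def ExpMinNE (Y1 Y2 q1 q2 p1 p2 ρ a0 b0 c0 d0 : ℝ) : Prop :=
  NashEq Y1 Y2 q1 q2 p1 p2 ρ a0 b0 c0 d0 ∧
  (∀ a b, S1 Y1 p1 p2 ρ a b → P1 q1 q2 a b c0 d0 = P1 q1 q2 a0 b0 c0 d0 →
    a0 * p1 + b0 * (p2 + ρ) ≤ a * p1 + b * (p2 + ρ)) ∧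
  (∀ c d, S2 Y2 p1 p2 ρ c d → P2 q1 q2 a0 b0 c d = P2 q1 q2 a0 b0 c0 d0 →
    c0 * (p1 + ρ) + d0 * p2 ≤ c * (p1 + ρ) + d * p2)

section

variable {Y p1 p2 ρ q1 q2 a b c d : ℝ}

lemma S1.add_le_div (hp1 : 0 < p1) (hcheap : p1 ≤ p2 + ρ) (h : S1 Y p1 p2 ρ a b) :
    a + b ≤ Y / p1 := by
  obtain ⟨ha, hb, hbudget⟩ := h
  rw [le_div_iff₀ hp1]
  nlinarith

lemma P1_le_add : P1 q1 q2 a b c d ≤ a + b :=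
  add_le_add (min_le_left _ _) (min_le_left _ _)

lemma P1_zero_eq_of_le (ha : a ≤ q1) : P1 q1 q2 a 0 c d = a := by
  rw [P1, min_eq_left ha, min_eq_left (le_max_left 0 _), add_zero]

lemma S1_div_zero (hY : 0 ≤ Y) (hp1 : 0 < p1) : S1 Y p1 p2 ρ (Y / p1) 0 :=
  ⟨div_nonneg hY hp1.le, le_rfl, by rw [zero_mul, add_zero, div_mul_cancel₀ _ hp1.ne']⟩

lemma P1_le_P1_div_zero (hp1 : 0 < p1) (hcheap : p1 ≤ p2 + ρ) (hY : Y ≤ p1 * q1)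
    (h : S1 Y p1 p2 ρ a b) : P1 q1 q2 a b c d ≤ P1 q1 q2 (Y / p1) 0 c d := by
  rw [P1_zero_eq_of_le ((div_le_iff₀' hp1).mpr hY)]
  exact P1_le_add.trans (h.add_le_div hp1 hcheap)

lemma P2_eq_P1_swap : P2 q1 q2 a b c d = P1 q2 q1 d c b a := rfl

lemma S2_iff_S1_swap : S2 Y p1 p2 ρ c d ↔ S1 Y p2 p1 ρ d c := by
  simp only [S1, S2, add_comm (c * (p1 + ρ)), and_left_comm]

end

theorem zoneI_moderate_nash_general (Y1 Y2 q1 q2 ρ p1 p2 : ℝ)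
    (hY1 : 0 < Y1) (hY2 : 0 < Y2)
    (hp1 : 0 < p1) (hp2 : 0 < p2)
    (hΔ : |p1 - p2| ≤ ρ)
    (h1 : Y1 < p1 * q1) (h2 : Y2 < p2 * q2) :
    NashEq Y1 Y2 q1 q2 p1 p2 ρ (Y1 / p1) 0 0 (Y2 / p2) := by
  obtain ⟨hΔ1, hΔ2⟩ := abs_sub_le_iff.mp hΔ
  have hcheap1 : p1 ≤ p2 + ρ := by linarith
  have hcheap2 : p2 ≤ p1 + ρ := by linarith
  refine ⟨S1_div_zero hY1.le hp1, S2_iff_S1_swap.mpr (S1_div_zero hY2.le hp2), ?_, ?_⟩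
  · intro a b h
    exact P1_le_P1_div_zero hp1 hcheap1 h1.le h
  · intro c d h
    rw [P2_eq_P1_swap, P2_eq_P1_swap]
    exact P1_le_P1_div_zero hp2 hcheap2 h2.le (S2_iff_S1_swap.mp h)

/-- Proposition 3 (zone I, `Δp ∈ [−ρ, ρ]`): the quadruple `(Y₁/p₁, 0, 0, Y₂/p₂)`
is a Nash equilibrium, in which each consumer spends the entire income locally. -/
theorem zoneI_moderate_nash (Y1 Y2 q1 q2 ρ p1 p2 : ℝ)
    (hY1 : 0 < Y1) (hY2 : 0 < Y2) (hq1 : 0 < q1) (hq2 : 0 < q2) (hρ : 0 < ρ)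
    (hp1 : 0 < p1) (hp2 : 0 < p2)
    (hΔ : |p1 - p2| ≤ ρ)
    (h1 : Y1 < p1 * q1) (h2 : Y2 < p2 * q2) :
    NashEq Y1 Y2 q1 q2 p1 p2 ρ (Y1 / p1) 0 0 (Y2 / p2) :=
  zoneI_moderate_nash_general Y1 Y2 q1 q2 ρ p1 p2 hY1 hY2 hp1 hp2 hΔ h1 h2
end
end

section
/- (Proposition 4b, zone IV-2, type I) Assume p₁ > 0, p₂ > 0, p₁ ≤ p₂ + ρ (i.e. Δp ≤ ρ), p₁·q₁ ≤ Y₁, 0 < Y₂ < p₂·q₂, and Y₁ − p₂'·(q₂ − Y₂/p₂) < p₁·q₁ (the point (Y₁, Y₂) lies strictly below the line ℓ₃). Then the quadruple (q₁, (Y₁ − p₁·q₁)/p₂', 0, Y₂/p₂) is a Nash equilibrium. -/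
open Filter

noncomputable section

/-! Consumer I buys all of market 1, so consumer II can only buy in market 2, where its whole
budget buys `Y₂/p₂ < q₂` units. Against that, consumer I faces a residual `q₂ − Y₂/p₂` in
market 2 which (below `ℓ₃`) exceeds what its budget can still afford after buying `q₁` at
home; since `p₁ ≤ p₂'`, a unit of money buys at least as much at home, so filling market 1 and
spending the rest abroad is a best response. -/

lemma min_add_le_of_budget {a b q p p' Y : ℝ} (hp : 0 ≤ p) (hpp' : p ≤ p') (hp' : 0 < p')
    (hab : a * p + b * p' ≤ Y) : min a q + b ≤ q + (Y - p * q) / p' := by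
  rw [← sub_le_iff_le_add', le_div_iff₀ hp']
  have hmin_le : min a q * p ≤ a * p := mul_le_mul_of_nonneg_right (min_le_left a q) hp
  have hmin_cap : min a q * (p' - p) ≤ q * (p' - p) :=
    mul_le_mul_of_nonneg_right (min_le_right a q) (sub_nonneg.2 hpp')
  linarith

lemma le_div_of_budget {c d p p' Y : ℝ} (hc : 0 ≤ c) (hp' : 0 ≤ p') (hp : 0 < p)
    (hcd : c * p' + d * p ≤ Y) : d ≤ Y / p := by
  rw [le_div_iff₀ hp]
  linarith [mul_nonneg hc hp']

lemma P1_le_min_add (q1 q2 a b c d : ℝ) : P1 q1 q2 a b c d ≤ min a q1 + b :=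
  add_le_add_right (min_le_left _ _) _

lemma P1_eq_min_add_of_le {q1 q2 a b c d : ℝ} (hb : b ≤ q2 - d) :
    P1 q1 q2 a b c d = min a q1 + b := by
  rw [P1, min_eq_left (hb.trans (le_max_right _ _))]

lemma P2_le_min_of_cornered (q1 q2 b c d : ℝ) : P2 q1 q2 q1 b c d ≤ min d q2 := by
  rw [P2, sub_self, max_self]
  linarith [min_le_right c 0]

lemma P2_zero_left (q1 q2 a b d : ℝ) : P2 q1 q2 a b 0 d = min d q2 := by
  simp [P2]

theorem zoneIV2_typeI_nash_general (Y1 Y2 q1 q2 ρ p1 p2 : ℝ)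
    (hY2 : 0 < Y2) (hq1 : 0 < q1) (hρ : 0 < ρ)
    (hp1 : 0 < p1) (hp2 : 0 < p2)
    (hΔ : p1 ≤ p2 + ρ)
    (h1 : p1 * q1 ≤ Y1) (h2 : Y2 < p2 * q2)
    (hl3 : Y1 - (p2 + ρ) * (q2 - Y2 / p2) < p1 * q1) :
    NashEq Y1 Y2 q1 q2 p1 p2 ρ q1 ((Y1 - p1 * q1) / (p2 + ρ)) 0 (Y2 / p2) := by
  have hp2' : 0 < p2 + ρ := hp1.trans_le hΔ
  have hd0 : Y2 / p2 < q2 := (div_lt_iff₀ hp2).2 (by linarith)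
  have hb0 : (Y1 - p1 * q1) / (p2 + ρ) ≤ q2 - Y2 / p2 :=
    (div_le_iff₀ hp2').2 (by linarith)
  refine ⟨⟨hq1.le, div_nonneg (by linarith) hp2'.le, ?_⟩,
    ⟨le_rfl, div_nonneg hY2.le hp2.le, ?_⟩, ?_, ?_⟩
  · rw [div_mul_cancel₀ _ hp2'.ne']
    linarith
  · rw [div_mul_cancel₀ _ hp2.ne']
    simp
  · rintro a b ⟨-, -, hab⟩
    rw [P1_eq_min_add_of_le hb0, min_self]
    exact (P1_le_min_add ..).trans (min_add_le_of_budget hp1.le hΔ hp2' hab)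
  · rintro c d ⟨hc, -, hcd⟩
    rw [P2_zero_left, min_eq_left hd0.le]
    exact (P2_le_min_of_cornered ..).trans
      ((min_le_left _ _).trans (le_div_of_budget hc (by linarith) hp2 hcd))

/-- Proposition 4b (zone IV-2, type I, `Δp ≤ ρ`): the quadruple
`(q₁, (Y₁ − p₁q₁)/p₂', 0, Y₂/p₂)` is a Nash equilibrium. -/
theorem zoneIV2_typeI_nash (Y1 Y2 q1 q2 ρ p1 p2 : ℝ)
    (hY1 : 0 < Y1) (hY2 : 0 < Y2) (hq1 : 0 < q1) (hq2 : 0 < q2) (hρ : 0 < ρ)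
    (hp1 : 0 < p1) (hp2 : 0 < p2)
    (hΔ : p1 ≤ p2 + ρ)
    (h1 : p1 * q1 ≤ Y1) (h2 : Y2 < p2 * q2)
    (hl3 : Y1 - (p2 + ρ) * (q2 - Y2 / p2) < p1 * q1) :
    NashEq Y1 Y2 q1 q2 p1 p2 ρ q1 ((Y1 - p1 * q1) / (p2 + ρ)) 0 (Y2 / p2) :=
  zoneIV2_typeI_nash_general Y1 Y2 q1 q2 ρ p1 p2 hY2 hq1 hρ hp1 hp2 hΔ h1 h2 hl3
end
end
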